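/- Let a ∈ ℝ^J be a nonzero vector, let b ∈ ℝ, and let H = {y ∈ ℝ^J : ⟨a, y⟩ ≤ b}. Let x ∈ ℝ^J satisfy ⟨a, x⟩ > b, let 0 < λ < 2, and define the relaxed projection step x' := x − λ ((⟨a, x⟩ − b)/‖a‖²) a. Then for every y ∈ H, ‖x' − y‖² ≤ ‖x − y‖² − λ(2 − λ) (⟨a, x⟩ − b)² / ‖a‖²; in particular ‖x' − y‖ ≤ ‖x − y‖ for every y ∈ H, with strict inequality since ⟨a, x⟩ > b. -/

import Mathlib

open RealInnerProductSpace

/-- Fejér-monotonicity inequality for one relaxed projection (AMS) step onto a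
half-space: if `⟪a, x⟫ > b` and `x' = x - λ ((⟪a, x⟫ - b)/‖a‖²) a` with `0 < λ < 2`,
then for every `y` in the half-space,
`‖x' - y‖² ≤ ‖x - y‖² - λ(2 - λ)(⟪a, x⟫ - b)²/‖a‖²`, and in particular
`‖x' - y‖ < ‖x - y‖`. -/
theorem ams_relaxed_projection_fejer
    (J : ℕ) (a : EuclideanSpace ℝ (Fin J)) (ha : a ≠ 0) (b : ℝ)
    (H : Set (EuclideanSpace ℝ (Fin J)))
    (hH : H = {y : EuclideanSpace ℝ (Fin J) | ⟪a, y⟫ ≤ b})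
    (x : EuclideanSpace ℝ (Fin J)) (hx : ⟪a, x⟫ > b)
    (lam : ℝ) (hlam0 : 0 < lam) (hlam2 : lam < 2)
    (x' : EuclideanSpace ℝ (Fin J))
    (hx' : x' = x - (lam * ((⟪a, x⟫ - b) / ‖a‖ ^ 2)) • a) :
    ∀ y ∈ H,
      ‖x' - y‖ ^ 2 ≤ ‖x - y‖ ^ 2 - lam * (2 - lam) * (⟪a, x⟫ - b) ^ 2 / ‖a‖ ^ 2
        ∧ ‖x' - y‖ < ‖x - y‖ := by
  intro y hy
  rw [hH] at hy
  have hyb : ⟪a, y⟫ ≤ b := hy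
  have hna0 : ‖a‖ ≠ 0 := norm_ne_zero_iff.mpr ha
  have hna : (0:ℝ) < ‖a‖ ^ 2 := by positivity
  set c : ℝ := ⟪a, x⟫ - b with hc
  have hc0 : 0 < c := sub_pos.mpr hx
  set t : ℝ := lam * (c / ‖a‖ ^ 2) with ht
  have hdiff : x' - y = (x - y) - t • a := by
    rw [hx']; abel
  have hexp : ‖x' - y‖ ^ 2 = ‖x - y‖ ^ 2 - 2 * t * ⟪a, x - y⟫ + t ^ 2 * ‖a‖ ^ 2 := by
    rw [hdiff, norm_sub_sq_real, inner_smul_right, norm_smul, real_inner_comm]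
    simp [mul_pow, abs_mul_abs_self, sq_abs]
    ring
  have hinner : c ≤ ⟪a, x - y⟫ := by
    rw [inner_sub_right]; linarith
  have ht0 : 0 < t := by positivity
  have key : ‖x' - y‖ ^ 2 ≤ ‖x - y‖ ^ 2 - lam * (2 - lam) * c ^ 2 / ‖a‖ ^ 2 := by
    rw [hexp]
    have h1 : 2 * t * c ≤ 2 * t * ⟪a, x - y⟫ := by nlinarith
    have h2 : t ^ 2 * ‖a‖ ^ 2 = lam ^ 2 * c ^ 2 / ‖a‖ ^ 2 := by
      rw [ht]; field_simp
    rw [h2]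
    have : lam * (2 - lam) * c ^ 2 / ‖a‖ ^ 2 = 2 * t * c - lam ^ 2 * c ^ 2 / ‖a‖ ^ 2 := by
      rw [ht]; field_simp
    nlinarith [this, h1]
  refine ⟨key, ?_⟩
  have hpos : 0 < lam * (2 - lam) * c ^ 2 / ‖a‖ ^ 2 := by
    have : 0 < 2 - lam := by linarith
    positivity
  have hsq : ‖x' - y‖ ^ 2 < ‖x - y‖ ^ 2 := by linarith
  exact lt_of_pow_lt_pow_left₀ 2 (norm_nonneg _) hsq
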